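/- Let I = (𝔼, D, c, f) be a CMP instance whose objective f is of type sum, product, or bottleneck, and let E = {e_1,…,e_k} ⊆ 𝔼. Then max_{l=1,…,k} l'(I,e_l) ≤ l'(I,E) ≤ Σ_{l=1}^k l'(I,e_l). -/

import Mathlib

open scoped ENNReal BigOperators

/-- Objective type of a combinatorial minimization problem:
sum, product, or bottleneck. -/
inductive ObjType where
  | sum : ObjType
  | prod : ObjType
  | bottleneck : ObjType
deriving DecidableEq

/-- The cost `f_c(S)` of a feasible solution `S` under cost function `c`:
the sum, the product, or the maximum (for nonempty `S`) of the element costs. -/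
noncomputable def objCost {ι : Type*} (t : ObjType) (c : ι → ℝ) (S : Finset ι) : ℝ :=
  match t with
  | ObjType.sum => ∑ e ∈ S, c e
  | ObjType.prod => ∏ e ∈ S, c e
  | ObjType.bottleneck => if h : S.Nonempty then S.sup' h c else 0

/-- The optimal objective value `f(I)` of the instance with feasible set `D`. -/
noncomputable def optVal {ι : Type*} (t : ObjType) (c : ι → ℝ) (D : Finset (Finset ι)) : ℝ :=
  if h : D.Nonempty then D.inf' h (objCost t c) else 0

/-- `S` is an optimal solution of the instance `(𝔼, D, c, f)`. -/
def isOpt {ι : Type*} (t : ObjType) (c : ι → ℝ) (D : Finset (Finset ι)) (S : Finset ι) : Prop :=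
  S ∈ D ∧ objCost t c S = optVal t c D

/-- `0 ≤ a < maxdec(e)`, where `maxdec(e) = ∞` for sum/bottleneck objectives and
`maxdec(e) = c(e)` for the product objective. -/
def decOK {ι : Type*} (t : ObjType) (c : ι → ℝ) (e : ι) (a : ℝ) : Prop :=
  0 ≤ a ∧ (t = ObjType.prod → a < c e)

/-- Extended single upper tolerance
`u'(I,e) = sup {α ≥ 0 : every optimal solution of I is optimal for I_{α,e}}` valued in `[0,∞]`. -/
noncomputable def uTol {ι : Type*} [DecidableEq ι] (t : ObjType) (c : ι → ℝ)
    (D : Finset (Finset ι)) (e : ι) : ℝ≥0∞ :=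
  sSup (ENNReal.ofReal '' {a : ℝ | 0 ≤ a ∧
    ∀ S : Finset ι, isOpt t c D S →
      isOpt t (fun x => if x = e then c x + a else c x) D S})

/-- Extended regular set upper tolerance `u'(I,E)`, valued in `[0,∞]`. -/
noncomputable def uTolSet {ι : Type*} [DecidableEq ι] (t : ObjType) (c : ι → ℝ)
    (D : Finset (Finset ι)) (E : Finset ι) : ℝ≥0∞ :=
  sSup (ENNReal.ofReal '' {a : ℝ |
    ∀ S : Finset ι, isOpt t c D S →
      ∃ α : ι → ℝ, (∀ x, 0 ≤ α x) ∧ (∀ x ∉ E, α x = 0) ∧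
        a = ∑ x ∈ E, α x ∧ isOpt t (fun x => c x + α x) D S})

/-- Extended reverse set upper tolerance `u_b'(I,E)`, valued in `[0,∞]` (`inf ∅ = ∞`). -/
noncomputable def uTolSetRev {ι : Type*} [DecidableEq ι] (t : ObjType) (c : ι → ℝ)
    (D : Finset (Finset ι)) (E : Finset ι) : ℝ≥0∞ :=
  sInf (ENNReal.ofReal '' {a : ℝ |
    ∃ S : Finset ι, isOpt t c D S ∧
      ∃ α : ι → ℝ, (∀ x, 0 ≤ α x) ∧ (∀ x ∉ E, α x = 0) ∧
        a = ∑ x ∈ E, α x ∧ ¬ isOpt t (fun x => c x + α x) D S})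

/-- New single lower tolerance
`l'(I,e) = sup {α : 0 ≤ α < maxdec(e), f(I_{−α,e}) = f(I)}`, valued in `[0,∞]`. -/
noncomputable def lTol {ι : Type*} [DecidableEq ι] (t : ObjType) (c : ι → ℝ)
    (D : Finset (Finset ι)) (e : ι) : ℝ≥0∞ :=
  sSup (ENNReal.ofReal '' {a : ℝ | decOK t c e a ∧
    optVal t (fun x => if x = e then c x - a else c x) D = optVal t c D})

/-- New regular set lower tolerance `l'(I,E)`, valued in `[0,∞]`. -/
noncomputable def lTolSet {ι : Type*} [DecidableEq ι] (t : ObjType) (c : ι → ℝ)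
    (D : Finset (Finset ι)) (E : Finset ι) : ℝ≥0∞ :=
  sSup (ENNReal.ofReal '' {a : ℝ |
    ∃ α : ι → ℝ, (∀ x ∈ E, decOK t c x (α x)) ∧ (∀ x ∉ E, α x = 0) ∧
      a = ∑ x ∈ E, α x ∧ optVal t (fun x => c x - α x) D = optVal t c D})

/-- New reverse set lower tolerance `l_b'(I,E)`, valued in `[0,∞]` (`inf ∅ = ∞`). -/
noncomputable def lTolSetRev {ι : Type*} [DecidableEq ι] (t : ObjType) (c : ι → ℝ)
    (D : Finset (Finset ι)) (E : Finset ι) : ℝ≥0∞ :=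
  sInf (ENNReal.ofReal '' {a : ℝ |
    ∃ α : ι → ℝ, (∀ x ∈ E, decOK t c x (α x)) ∧ (∀ x ∉ E, α x = 0) ∧
      a = ∑ x ∈ E, α x ∧ optVal t (fun x => c x - α x) D < optVal t c D})

/-!
Lowering costs can only lower the optimal value, as long as all product costs stay nonnegative.
Hence, if lowering the costs on `E` by `α` keeps `f(I)`, so does lowering the single cost of
`e ∈ E` by `α e`, which is squeezed in between; this gives `l'(I,E) ≤ Σ l'(I,e)`. Conversely a
single decrease of `e ∈ E` is a set decrease supported on `E`, which gives `l'(I,e) ≤ l'(I,E)`.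
-/

section Monotonicity

variable {ι : Type*} (t : ObjType) {c₁ c₂ : ι → ℝ}

lemma objCost_mono (h : c₁ ≤ c₂) (hp : t = ObjType.prod → 0 ≤ c₁) (S : Finset ι) :
    objCost t c₁ S ≤ objCost t c₂ S := by
  cases t with
  | sum => exact Finset.sum_le_sum fun i _ => h i
  | prod => exact Finset.prod_le_prod (fun i _ => hp rfl i) fun i _ => h i
  | bottleneck =>
    unfold objCost
    split_ifs with hS
    · exact Finset.sup'_le hS _ fun i hi => (h i).trans (Finset.le_sup' c₂ hi)
    · exact le_rfl

lemma optVal_mono (h : c₁ ≤ c₂) (hp : t = ObjType.prod → 0 ≤ c₁) (D : Finset (Finset ι)) :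
    optVal t c₁ D ≤ optVal t c₂ D := by
  unfold optVal
  split_ifs with hD
  · obtain ⟨S, hS, hSeq⟩ := Finset.exists_mem_eq_inf' hD (objCost t c₂)
    rw [hSeq]
    exact (Finset.inf'_le _ hS).trans (objCost_mono t h hp S)
  · exact le_rfl

lemma optVal_eq_of_le_of_le {c₃ : ι → ℝ} (h₁₂ : c₁ ≤ c₂) (h₂₃ : c₂ ≤ c₃)
    (hp : t = ObjType.prod → 0 ≤ c₁) (D : Finset (Finset ι))
    (h : optVal t c₁ D = optVal t c₃ D) : optVal t c₂ D = optVal t c₃ D :=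
  le_antisymm (optVal_mono t h₂₃ (fun ht => (hp ht).trans h₁₂) D)
    (h ▸ optVal_mono t h₁₂ hp D)

end Monotonicity

section Tolerances

variable {ι : Type*} [DecidableEq ι] {t : ObjType} {c : ι → ℝ} {D : Finset (Finset ι)}

lemma lTol_le_lTolSet (hpos : t = ObjType.prod → ∀ x, 0 < c x) {E : Finset ι} {e : ι}
    (he : e ∈ E) : lTol t c D e ≤ lTolSet t c D E := by
  refine sSup_le_sSup (Set.image_mono ?_)
  rintro a ⟨ha, hopt⟩
  refine ⟨Pi.single e a, fun x _ => ?_, fun x hx => ?_, ?_, ?_⟩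
  · rcases eq_or_ne x e with rfl | hxe
    · simpa using ha
    · rw [Pi.single_eq_of_ne hxe]
      exact ⟨le_rfl, fun ht => hpos ht x⟩
  · simp [(ne_of_mem_of_not_mem he hx).symm]
  · rw [Finset.sum_pi_single' e a E, if_pos he]
  · convert hopt using 2
    ext x
    rcases eq_or_ne x e with rfl | hxe <;> simp [*]

lemma lTolSet_le_sum_lTol (hpos : t = ObjType.prod → ∀ x, 0 < c x) (E : Finset ι) :
    lTolSet t c D E ≤ ∑ e ∈ E, lTol t c D e := by
  refine sSup_le ?_
  rintro _ ⟨_, ⟨α, hdec, hzero, rfl, hopt⟩, rfl⟩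
  have hα : ∀ x, 0 ≤ α x := fun x => by
    by_cases hx : x ∈ E
    · exact (hdec x hx).1
    · exact (hzero x hx).ge
  have hlowered : t = ObjType.prod → 0 ≤ fun x => c x - α x := fun ht x => by
    by_cases hx : x ∈ E
    · exact sub_nonneg.2 ((hdec x hx).2 ht).le
    · simpa [hzero x hx] using (hpos ht x).le
  rw [ENNReal.ofReal_sum_of_nonneg fun x _ => hα x]
  refine Finset.sum_le_sum fun e he => le_sSup ⟨α e, ⟨hdec e he, ?_⟩, rfl⟩
  refine optVal_eq_of_le_of_le t (fun x => ?_) (fun x => ?_) hlowered D hopt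
  · rcases eq_or_ne x e with rfl | hxe <;> simp [*]
  · rcases eq_or_ne x e with rfl | hxe <;> simp [*]

end Tolerances

theorem lrg_bounds_general {ι : Type*} [DecidableEq ι]
    (t : ObjType) (c : ι → ℝ) (D : Finset (Finset ι))
    (hpos : t = ObjType.prod → ∀ x, 0 < c x)
    (E : Finset ι) :
    (E.sup fun e => lTol t c D e) ≤ lTolSet t c D E ∧
      lTolSet t c D E ≤ ∑ e ∈ E, lTol t c D e :=
  ⟨Finset.sup_le fun _ he => lTol_le_lTolSet hpos he, lTolSet_le_sum_lTol hpos E⟩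

/-- Theorem 6(a): `max_{l} l'(I,e_l) ≤ l'(I,E) ≤ Σ_{l} l'(I,e_l)`. -/
theorem lrg_bounds {ι : Type*} [Fintype ι] [DecidableEq ι]
    (t : ObjType) (c : ι → ℝ) (D : Finset (Finset ι))
    (hD : D.Nonempty) (hSne : ∀ S ∈ D, S.Nonempty)
    (hpos : t = ObjType.prod → ∀ x, 0 < c x)
    (E : Finset ι) (hE : E.Nonempty) :
    (E.sup fun e => lTol t c D e) ≤ lTolSet t c D E ∧
      lTolSet t c D E ≤ ∑ e ∈ E, lTol t c D e :=
  lrg_bounds_general t c D hpos E
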